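/- arXiv:1110.1826 — 3 statements merged into one kernel-verified Lean document; each statement's English description precedes it below -/
import Mathlib

section
/- Let B be a base of a matroid M, let a ∉ B with B + a dependent, and let b ∈ C(B,a) (the support of a in B). Then B' = B - b + a is a base, and the support of b in B' satisfies C(B',b) = C(B,a) - b + a. -/
open Set

/-- A circuit of a matroid: a minimal dependent set. -/
def IsCircuitOf {α : Type*} (M : Matroid α) (C : Set α) : Prop :=
  M.Dep C ∧ ∀ D, D ⊂ C → ¬ M.Dep D

/-- The support `C(I,x)` of `x` in `I`: the set of elements of `I` lying in a circuit
contained in `insert x I` and containing `x` (for a base `I` and `x ∉ I` with `insert x I`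
dependent this is the fundamental circuit of `x` with respect to `I`, minus `x`). -/
def suppOf {α : Type*} (M : Matroid α) (I : Set α) (x : α) : Set α :=
  {y ∈ I | ∃ C ⊆ insert x I, IsCircuitOf M C ∧ x ∈ C ∧ y ∈ C}

/- A circuit of `insert x I` through `x`, for `I` independent, is the fundamental circuit
`M.fundCircuit x I`, so `suppOf M I x = I ∩ M.fundCircuit x I`. Removing an element `b` of that
circuit from `insert a B` leaves an independent set, hence a base `B'`; since
`insert b B' = insert a B`, the fundamental circuit of `b` in `B'` is again that of `a` in `B`. -/

section

variable {α : Type*} {M : Matroid α} {I C : Set α} {x y : α}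

theorem isCircuitOf_iff_isCircuit : IsCircuitOf M C ↔ M.IsCircuit C := by
  refine Matroid.isCircuit_iff_forall_ssubset.trans (and_congr_right fun hC ↦ ?_) |>.symm
  refine forall_congr' fun D ↦ imp_congr_right fun hDC ↦ ?_
  exact (Matroid.not_dep_iff (hDC.subset.trans hC.subset_ground)).symm

theorem Matroid.Indep.suppOf_eq_inter_fundCircuit (hI : M.Indep I) (hx : x ∈ M.closure I \ I) :
    suppOf M I x = I ∩ M.fundCircuit x I := by
  ext y
  simp only [suppOf, isCircuitOf_iff_isCircuit, mem_ofPred_eq, mem_inter_iff]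
  refine and_congr_right fun _ ↦ ⟨?_, fun hy ↦ ?_⟩
  · rintro ⟨C, hCI, hC, -, hyC⟩
    exact hC.eq_fundCircuit_of_subset hI hCI ▸ hyC
  · exact ⟨_, M.fundCircuit_subset_insert x I, hI.fundCircuit_isCircuit hx.1 hx.2,
      M.mem_fundCircuit x I, hy⟩

theorem Matroid.Indep.fundCircuit_exchange (hI : M.Indep I) (hx : x ∈ M.closure I \ I)
    (hyI : y ∈ I) (hy : y ∈ M.fundCircuit x I) :
    M.fundCircuit y (insert x I \ {y}) = M.fundCircuit x I := by
  have hsub : M.fundCircuit x I ⊆ insert y (insert x I \ {y}) := by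
    rw [insert_sdiff_singleton, insert_eq_of_mem (mem_insert_of_mem x hyI)]
    exact M.fundCircuit_subset_insert x I
  exact ((hI.fundCircuit_isCircuit hx.1 hx.2).eq_fundCircuit_of_subset
    ((hI.mem_fundCircuit_iff hx.1 hx.2).1 hy) hsub).symm

end

theorem supp_after_exchange_general {α : Type*} (M : Matroid α) (B : Set α) (a b : α)
    (hB : M.IsBase B) (hdep : M.Dep (insert a B))
    (hb : b ∈ suppOf M B a) :
    M.IsBase (insert a (B \ {b})) ∧
      suppOf M (insert a (B \ {b})) b = insert a (suppOf M B a \ {b}) := by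
  have ha : a ∈ M.closure B \ B := hB.indep.insert_dep_iff.1 hdep
  rw [hB.indep.suppOf_eq_inter_fundCircuit ha] at hb ⊢
  obtain ⟨hbB, hba⟩ := hb
  have hab : a ≠ b := ne_of_mem_of_not_mem hbB ha.2 |>.symm
  rw [insert_sdiff_singleton_comm hab B]
  have hbase : M.IsBase (insert a B \ {b}) :=
    hB.exchange_isBase_of_indep' hbB ha.2 ((hB.indep.mem_fundCircuit_iff ha.1 ha.2).1 hba)
  have hb' : b ∈ M.closure (insert a B \ {b}) \ (insert a B \ {b}) := by
    simpa [hbase.closure_eq] using hB.subset_ground hbB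
  refine ⟨hbase, ?_⟩
  rw [hbase.indep.suppOf_eq_inter_fundCircuit hb', hB.indep.fundCircuit_exchange ha hbB hba,
    ← insert_sdiff_singleton_comm hab, insert_inter_of_mem (M.mem_fundCircuit a B),
    inter_sdiff_right_comm]

theorem supp_after_exchange {α : Type*} (M : Matroid α) (B : Set α) (a b : α)
    (hB : M.IsBase B) (haB : a ∉ B) (hdep : M.Dep (insert a B))
    (hb : b ∈ suppOf M B a) :
    M.IsBase (insert a (B \ {b})) ∧
      suppOf M (insert a (B \ {b})) b = insert a (suppOf M B a \ {b}) :=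
  supp_after_exchange_general M B a b hB hdep hb
end

section
/- Let A and B be disjoint bases of a matroid M, and suppose X = {a₁,...,a_m} ⊆ A and Y = {b₁,...,b_m} ⊆ B are ordered so that for each i, B_i' = (B \ {b₁,...,bᵢ}) ∪ {a₁,...,aᵢ} is a base (a serial exchange relative to B). Then for each k = 1,...,m, the union over i = 1,...,k of C(B,aᵢ) equals the union over i = 1,...,k of C((B \ {b₁,...,b_{i-1}}) ∪ {a₁,...,a_{i-1}}, aᵢ) ∩ B. -/
/-!
For a base `I` and `x ∉ I`, an element `y ∈ I` lies in `C(I, x)` exactly when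
`x ∉ cl(I \ {y})`. Fix `y ∈ B` and write `Bⱼ` for the base obtained from `B` by the first
`j - 1` exchanges. As long as `a₁, …, aⱼ₋₁ ∈ cl(B \ {y})`, the element `y` has not been
exchanged (otherwise an earlier base would lie in `cl(B \ {y})`), `Bⱼ \ {y} ⊆ cl(B \ {y})`,
and the exchange axiom then gives `y ∈ C(Bⱼ, aⱼ) ↔ y ∈ C(B, aⱼ)`. Hence both unions contain
`y` exactly when `y ∈ C(B, aⱼ)` for some `j ≤ k`: compare them at the least such `j`.
-/

open Set Matroid

namespace Matroid

variable {α : Type*} {M : Matroid α} {B I S : Set α} {x y : α}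

lemma isCircuitOf_iff {C : Set α} : IsCircuitOf M C ↔ M.IsCircuit C := by
  rw [isCircuit_iff_forall_ssubset, IsCircuitOf]
  exact and_congr_right fun hC ↦ forall₂_congr fun D hD ↦
    not_dep_iff (hD.subset.trans hC.subset_ground)

lemma Indep.suppOf_eq (hI : M.Indep I) (hx : x ∈ M.closure I) (hxI : x ∉ I) :
    suppOf M I x = I ∩ M.fundCircuit x I := by
  ext y
  simp only [suppOf, mem_ofPred_eq, mem_inter_iff, isCircuitOf_iff]
  refine and_congr_right fun _ ↦ ⟨?_, fun hy ↦ ⟨_, M.fundCircuit_subset_insert x I,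
    hI.fundCircuit_isCircuit hx hxI, M.mem_fundCircuit x I, hy⟩⟩
  rintro ⟨C, hCI, hC, -, hyC⟩
  exact hC.eq_fundCircuit_of_subset hI hCI ▸ hyC

lemma Indep.mem_suppOf_iff (hI : M.Indep I) (hx : x ∈ M.closure I) (hxI : x ∉ I) :
    y ∈ suppOf M I x ↔ y ∈ I ∧ x ∉ M.closure (I \ {y}) := by
  rw [hI.suppOf_eq hx hxI, mem_inter_iff, hI.mem_fundCircuit_iff hx hxI]
  refine and_congr_right fun hyI ↦ ?_
  rw [← insert_sdiff_singleton_comm (ne_of_mem_of_not_mem hyI hxI).symm,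
    (hI.sdiff {y}).insert_indep_iff_of_notMem fun h ↦ hxI h.1, mem_sdiff,
    and_iff_right (mem_ground_of_mem_closure hx)]

lemma IsBase.mem_suppOf_iff (hB : M.IsBase B) (hx : x ∈ M.E) (hxB : x ∉ B) :
    y ∈ suppOf M B x ↔ y ∈ B ∧ x ∉ M.closure (B \ {y}) :=
  hB.indep.mem_suppOf_iff (hB.closure_eq ▸ hx) hxB

lemma Spanning.not_subset_closure_sdiff_singleton (hS : M.Spanning S) (hI : M.Indep I)
    (hy : y ∈ I) : ¬ S ⊆ M.closure (I \ {y}) := fun h ↦ by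
  have hcl := closure_subset_closure_of_subset_closure h
  rw [hS.closure_eq] at hcl
  exact hI.notMem_closure_sdiff_of_mem hy (hcl (hI.subset_ground hy))

lemma sdiff_union_sdiff_singleton_subset_closure (hB : B ⊆ M.E)
    (hS : S ⊆ M.closure (B \ {y})) (T : Set α) :
    (B \ T ∪ S) \ {y} ⊆ M.closure (B \ {y}) := by
  rw [union_sdiff_distrib]
  exact union_subset (M.subset_closure_of_subset (sdiff_subset_sdiff_left sdiff_subset)
    (sdiff_subset.trans hB)) (sdiff_subset.trans hS)

section SerialExchange

variable {ι : Type*} [LinearOrder ι] {a b : ι → α}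

lemma isBase_serial_Iio [PredOrder ι] (hB : M.IsBase B)
    (hser : ∀ i, M.IsBase ((B \ b '' Iic i) ∪ a '' Iic i)) (i : ι) :
    M.IsBase ((B \ b '' Iio i) ∪ a '' Iio i) := by
  by_cases hi : IsMin i
  · simpa [hi.Iio_eq] using hB
  · rw [← Iic_pred_eq_Iio_of_not_isMin hi]
    exact hser _

lemma notMem_serial_Iio (haB : ∀ i, a i ∉ B) (ha : a.Injective) (i : ι) :
    a i ∉ (B \ b '' Iio i) ∪ a '' Iio i := by
  rintro (⟨hi, -⟩ | ⟨j, hj, hji⟩)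
  · exact haB i hi
  · exact lt_irrefl i (ha hji ▸ hj)

lemma notMem_image_Iio_of_image_subset_closure (hB : M.IsBase B)
    (hser : ∀ i, M.IsBase ((B \ b '' Iic i) ∪ a '' Iic i)) (haB : ∀ i, a i ∉ B)
    {y : α} {j : ι} (hy : y ∈ B) (h : a '' Iio j ⊆ M.closure (B \ {y})) :
    y ∉ b '' Iio j := by
  rintro ⟨l, hl, rfl⟩
  refine (hser l).spanning.not_subset_closure_sdiff_singleton hB.indep hy ?_
  have hbl : b l ∉ (B \ b '' Iic l) ∪ a '' Iic l := by
    rintro (⟨-, hbl⟩ | ⟨l', -, hl'⟩)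
    · exact hbl (mem_image_of_mem b self_mem_Iic)
    · exact haB l' (hl' ▸ hy)
  rw [← sdiff_singleton_eq_self hbl]
  exact sdiff_union_sdiff_singleton_subset_closure hB.subset_ground
    ((image_mono (Iic_subset_Iio.2 hl)).trans h) _

lemma mem_suppOf_serial_iff [PredOrder ι] (hB : M.IsBase B)
    (hser : ∀ i, M.IsBase ((B \ b '' Iic i) ∪ a '' Iic i)) (haB : ∀ i, a i ∉ B)
    (ha : a.Injective) {y : α} {j : ι} (hy : y ∈ B) (h : a '' Iio j ⊆ M.closure (B \ {y})) :
    y ∈ suppOf M ((B \ b '' Iio j) ∪ a '' Iio j) (a j) ↔ y ∈ suppOf M B (a j) := by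
  have hB' := isBase_serial_Iio hB hser j
  have haj := notMem_serial_Iio (b := b) haB ha j
  have haE : a j ∈ M.E := (hser j).subset_ground (Or.inr (mem_image_of_mem a self_mem_Iic))
  have hcl := closure_subset_closure_of_subset_closure
    (sdiff_union_sdiff_singleton_subset_closure hB.subset_ground h (b '' Iio j))
  rw [hB'.mem_suppOf_iff haE haj, hB.mem_suppOf_iff haE (haB j)]
  refine ⟨fun ⟨_, hj⟩ ↦ ⟨hy, fun hjB ↦ ?_⟩, fun ⟨_, hj⟩ ↦
    ⟨.inl ⟨hy, notMem_image_Iio_of_image_subset_closure hB hser haB hy h⟩, fun h' ↦ hj (hcl h')⟩⟩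
  have hexch := hB'.exchange_isBase_of_indep haj
    (((hB'.indep.sdiff _).insert_indep_iff_of_notMem fun h ↦ haj h.1).2 ⟨haE, hj⟩)
  exact hexch.spanning.not_subset_closure_sdiff_singleton hB.indep hy
    (insert_subset hjB (sdiff_union_sdiff_singleton_subset_closure hB.subset_ground h _))

end SerialExchange

end Matroid

theorem serial_exchange_supp_union_general {α : Type*} (M : Matroid α) (A B : Set α)
    (hB : M.IsBase B) (hAB : Disjoint A B)
    (m : ℕ) (a b : Fin m → α)
    (hainj : Function.Injective a)
    (haA : ∀ i, a i ∈ A)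
    (hser : ∀ i : Fin m,
      M.IsBase ((B \ (b '' {j | j ≤ i})) ∪ (a '' {j | j ≤ i}))) :
    ∀ k : Fin m,
      (⋃ i ∈ {i : Fin m | i ≤ k}, suppOf M B (a i)) =
        ⋃ i ∈ {i : Fin m | i ≤ k},
          (suppOf M ((B \ (b '' {j | j < i})) ∪ (a '' {j | j < i})) (a i)) ∩ B := by
  intro k
  have haB : ∀ i, a i ∉ B := fun i ↦ hAB.notMem_of_mem_left (haA i)
  have hsupp : ∀ {i y}, y ∈ suppOf M B (a i) ↔ y ∈ B ∧ a i ∉ M.closure (B \ {y}) :=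
    hB.mem_suppOf_iff ((hser _).subset_ground (Or.inr (mem_image_of_mem a self_mem_Iic))) (haB _)
  ext y
  simp only [mem_iUnion, mem_inter_iff, exists_prop, mem_ofPred_eq]
  constructor
  · rintro ⟨i, hik, hyi⟩
    obtain ⟨j, hj, hmin⟩ := wellFounded_lt.has_min {j | y ∈ suppOf M B (a j)} ⟨i, hyi⟩
    have hy : y ∈ B := hyi.1
    have h : a '' Iio j ⊆ M.closure (B \ {y}) := by
      rintro _ ⟨l, hl, rfl⟩
      exact by_contra fun hl' ↦ hmin l (hsupp.2 ⟨hy, hl'⟩) hl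
    exact ⟨j, (not_lt.1 fun hij ↦ hmin i hyi hij).trans hik,
      (mem_suppOf_serial_iff hB hser haB hainj hy h).2 hj, hy⟩
  · rintro ⟨i, hik, hyi, hy⟩
    by_cases h : a '' Iio i ⊆ M.closure (B \ {y})
    · exact ⟨i, hik, (mem_suppOf_serial_iff hB hser haB hainj hy h).1 hyi⟩
    · obtain ⟨_, ⟨l, hl, rfl⟩, hl'⟩ := not_subset.1 h
      exact ⟨l, hl.le.trans hik, hsupp.2 ⟨hy, hl'⟩⟩

theorem serial_exchange_supp_union {α : Type*} (M : Matroid α) (A B : Set α)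
    (hA : M.IsBase A) (hB : M.IsBase B) (hAB : Disjoint A B)
    (m : ℕ) (a b : Fin m → α)
    (hainj : Function.Injective a) (hbinj : Function.Injective b)
    (haA : ∀ i, a i ∈ A) (hbB : ∀ i, b i ∈ B)
    (hser : ∀ i : Fin m,
      M.IsBase ((B \ (b '' {j | j ≤ i})) ∪ (a '' {j | j ≤ i}))) :
    ∀ k : Fin m,
      (⋃ i ∈ {i : Fin m | i ≤ k}, suppOf M B (a i)) =
        ⋃ i ∈ {i : Fin m | i ≤ k},
          (suppOf M ((B \ (b '' {j | j < i})) ∪ (a '' {j | j < i})) (a i)) ∩ B :=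
  serial_exchange_supp_union_general M A B hB hAB m a b hainj haA hser
end

section
/- Let A and B be two disjoint bases of a matroid M with rank at least 2, and suppose every element of A is symmetrically exchangeable with a fixed element b ∈ B relative to A and B. Then for any b' ∈ B with b' ≠ b there exists a' ∈ A such that (a',b') is a symmetric exchange relative to A and B, and in particular there exist two disjoint symmetric exchanges relative to A and B. -/
/-! The first claim is the symmetric exchange property of bases, which holds in every matroid:
the fundamental circuit of `b'` in `A` meets the cocircuit `E \ cl (B \ {b'})` in `b'`, hence,
since a circuit and a cocircuit never meet in a single element, in some `a' ≠ b'` as well.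
For the two disjoint exchanges, pair such an `(a', b')` with `(a₂, b)` for any `a₂ ≠ a'`. -/

open Set

namespace Matroid

variable {α : Type*} {M : Matroid α} {A B : Set α} {b : α}

lemma IsBase.exists_symmetric_exchange (hA : M.IsBase A) (hB : M.IsBase B) (hb : b ∈ B) :
    ∃ a ∈ A, M.IsBase (insert b (A \ {a})) ∧ M.IsBase (insert a (B \ {b})) := by
  by_cases hbA : b ∈ A
  · exact ⟨b, hbA, by rwa [insert_sdiff_singleton, insert_eq_of_mem hbA],
      by rwa [insert_sdiff_singleton, insert_eq_of_mem hb]⟩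
  have hbE : b ∈ M.E := hB.subset_ground hb
  have hbcl : b ∈ M.closure A := hA.closure_eq ▸ hbE
  have hC : M.IsCircuit (M.fundCircuit b A) := hA.fundCircuit_isCircuit hbE hbA
  have hK : M.IsCocircuit (M.E \ M.closure (B \ {b})) :=
    hB.compl_closure_sdiff_singleton_isCocircuit hb
  have hbCK : b ∈ M.fundCircuit b A ∩ (M.E \ M.closure (B \ {b})) :=
    ⟨M.mem_fundCircuit b A, hbE, hB.indep.notMem_closure_sdiff_of_mem hb⟩
  obtain ⟨a, ⟨haC, haE, hacl⟩, hab⟩ :=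
    (hC.isCocircuit_inter_nontrivial hK ⟨b, hbCK⟩).exists_ne b
  have haA : a ∈ A := by
    simpa [hab] using M.fundCircuit_subset_insert b A haC
  refine ⟨a, haA, hA.exchange_isBase_of_indep hbA ?_, hB.exchange_base_of_notMem_closure hb hacl⟩
  rwa [hA.indep.mem_fundCircuit_iff hbcl hbA, ← insert_sdiff_singleton_comm hab.symm] at haC

end Matroid

theorem all_exchange_with_fixed_element_general {α : Type*} (M : Matroid α) (A B : Set α)
    (hA : M.IsBase A) (hB : M.IsBase B)
    (hrk : 2 ≤ A.ncard) (b : α) (hb : b ∈ B)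
    (hall : ∀ a ∈ A, M.IsBase (insert b (A \ {a})) ∧ M.IsBase (insert a (B \ {b}))) :
    (∀ b' ∈ B, b' ≠ b → ∃ a' ∈ A,
        M.IsBase (insert b' (A \ {a'})) ∧ M.IsBase (insert a' (B \ {b'}))) ∧
      ∃ a₁ ∈ A, ∃ a₂ ∈ A, ∃ b₁ ∈ B, ∃ b₂ ∈ B, a₁ ≠ a₂ ∧ b₁ ≠ b₂ ∧
        M.IsBase (insert b₁ (A \ {a₁})) ∧ M.IsBase (insert a₁ (B \ {b₁})) ∧
        M.IsBase (insert b₂ (A \ {a₂})) ∧ M.IsBase (insert a₂ (B \ {b₂})) := by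
  refine ⟨fun b' hb' _ ↦ hA.exists_symmetric_exchange hB hb', ?_⟩
  have hBcard : 1 < B.ncard := by
    rw [hB.ncard_eq_ncard_of_isBase hA]
    omega
  obtain ⟨b', hb', hb'b⟩ := exists_ne_of_one_lt_ncard hBcard b
  obtain ⟨a', ha', ha'1, ha'2⟩ := hA.exists_symmetric_exchange hB hb'
  obtain ⟨a₂, ha₂, ha₂a'⟩ := exists_ne_of_one_lt_ncard (by omega : 1 < A.ncard) a'
  exact ⟨a', ha', a₂, ha₂, b', hb', b, hb, ha₂a'.symm, hb'b, ha'1, ha'2, hall a₂ ha₂⟩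

theorem all_exchange_with_fixed_element {α : Type*} (M : Matroid α) (A B : Set α)
    (hA : M.IsBase A) (hB : M.IsBase B) (hAB : Disjoint A B)
    (hrk : 2 ≤ A.ncard) (b : α) (hb : b ∈ B)
    (hall : ∀ a ∈ A, M.IsBase (insert b (A \ {a})) ∧ M.IsBase (insert a (B \ {b}))) :
    (∀ b' ∈ B, b' ≠ b → ∃ a' ∈ A,
        M.IsBase (insert b' (A \ {a'})) ∧ M.IsBase (insert a' (B \ {b'}))) ∧
      ∃ a₁ ∈ A, ∃ a₂ ∈ A, ∃ b₁ ∈ B, ∃ b₂ ∈ B, a₁ ≠ a₂ ∧ b₁ ≠ b₂ ∧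
        M.IsBase (insert b₁ (A \ {a₁})) ∧ M.IsBase (insert a₁ (B \ {b₁})) ∧
        M.IsBase (insert b₂ (A \ {a₂})) ∧ M.IsBase (insert a₂ (B \ {b₂})) :=
  all_exchange_with_fixed_element_general M A B hA hB hrk b hb hall
end
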